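/- Let M ≥ 1 be an integer, p ∈ (0,1], and let Z_1, …, Z_M be independent Bernoulli(p) random variables on a probability space. Let Δ_1, …, Δ_M ∈ {0,1} be fixed constants, set ρ = (1/M) Σ_i Δ_i, and on the event Σ_i Z_i > 0 define ρ̂ = (Σ_i Z_i Δ_i) / (Σ_i Z_i). For any real ε with 0 < ε < pM, with probability at least 1 − 4·exp(−2ε²/M), the event {Σ_i Z_i > 0 and |ρ̂ − ρ| ≤ 2ε/(pM − ε)} holds. -/

import Mathlib

open MeasureTheory ProbabilityTheory BigOperators

/-!
Sampled indices are independent Bernoulli(p) trials, so Hoeffding's inequality keeps both the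
sample size `S = ∑ Zᵢ` and the sampled disagreement count `T = ∑ Zᵢ Δᵢ` within `ε` of their
means `pM` and `ρpM`, each failing with probability at most `2 exp(-2ε²/M)`. On the intersection
of the two good events, `S ≥ pM - ε > 0` and `|T - ρS| ≤ |T - ρpM| + ρ|pM - S| ≤ 2ε`, whence
`|T/S - ρ| ≤ 2ε/(pM - ε)`.
-/

section Hoeffding

open Finset

variable {Ω ι : Type*} [MeasurableSpace Ω] {μ : Measure Ω} [IsProbabilityMeasure μ]
  {X : ι → Ω → ℝ}

lemma hasSubgaussianMGF_sum_sub_integral_of_mem_Icc_zero_one (h_indep : iIndepFun X μ)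
    (hm : ∀ i, AEMeasurable (X i) μ) (hX : ∀ i, ∀ᵐ ω ∂μ, X i ω ∈ Set.Icc 0 1) (s : Finset ι) :
    HasSubgaussianMGF (fun ω ↦ ∑ i ∈ s, (X i ω - μ[X i])) (#s / 4) μ := by
  have h_indep' : iIndepFun (fun i ω ↦ X i ω - μ[X i]) μ :=
    (h_indep.comp (fun i x ↦ x - μ[X i]) fun _ ↦ measurable_id.sub_const _ :)
  have h_center : ∀ i ∈ s, HasSubgaussianMGF (fun ω ↦ X i ω - μ[X i]) (1 / 4) μ := fun i _ ↦ by
    have := hasSubgaussianMGF_of_mem_Icc (hm i) (hX i)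
    norm_num at this
    exact this
  simpa [div_eq_mul_one_div (#s : NNReal)] using
    HasSubgaussianMGF.sum_of_iIndepFun h_indep' h_center

lemma measureReal_abs_sum_sub_integral_ge_le (h_indep : iIndepFun X μ)
    (hm : ∀ i, AEMeasurable (X i) μ) (hX : ∀ i, ∀ᵐ ω ∂μ, X i ω ∈ Set.Icc 0 1) (s : Finset ι)
    {ε : ℝ} (hε : 0 ≤ ε) :
    μ.real {ω | ε ≤ |∑ i ∈ s, X i ω - ∑ i ∈ s, μ[X i]|} ≤ 2 * Real.exp (-2 * ε ^ 2 / #s) := by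
  have hS := hasSubgaussianMGF_sum_sub_integral_of_mem_Icc_zero_one h_indep hm hX s
  have hexp : Real.exp (-ε ^ 2 / (2 * ((#s / 4 : NNReal) : ℝ))) = Real.exp (-2 * ε ^ 2 / #s) := by
    push_cast; ring_nf
  calc μ.real {ω | ε ≤ |∑ i ∈ s, X i ω - ∑ i ∈ s, μ[X i]|}
      ≤ μ.real {ω | ε ≤ ∑ i ∈ s, (X i ω - μ[X i])}
        + μ.real {ω | ε ≤ (-fun ω ↦ ∑ i ∈ s, (X i ω - μ[X i])) ω} := by
        refine (measureReal_mono fun ω hω ↦ ?_).trans (measureReal_union_le _ _)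
        simpa only [Set.mem_ofPred_eq, Set.mem_union, Pi.neg_apply, sum_sub_distrib,
          le_abs] using hω
      _ ≤ 2 * Real.exp (-2 * ε ^ 2 / #s) := by
        rw [two_mul, ← hexp]
        exact add_le_add (hS.measure_ge_le hε) (hS.neg.measure_ge_le hε)

end Hoeffding

lemma integral_eq_measureReal_of_eq_zero_or_one {Ω : Type*} [MeasurableSpace Ω] {μ : Measure Ω}
    {Z : Ω → ℝ} (hm : Measurable Z) (hZ : ∀ ω, Z ω = 0 ∨ Z ω = 1) :
    μ[Z] = μ.real {ω | Z ω = 1} := by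
  have : Z = Set.indicator {ω | Z ω = 1} 1 := by
    ext ω
    rcases hZ ω with h | h <;> simp [h]
  conv_lhs => rw [this]
  exact integral_indicator_one (hm (measurableSet_singleton 1))

lemma one_div_mul_sum_mem_Icc_zero_one {n : ℕ} {c : Fin n → ℝ} (hc : ∀ i, c i ∈ Set.Icc 0 1) :
    1 / (n : ℝ) * ∑ i, c i ∈ Set.Icc 0 1 := by
  rcases n.eq_zero_or_pos with rfl | hn
  · simp
  have hsum : ∑ i, c i ≤ n := by
    simpa using Finset.sum_le_sum (s := Finset.univ) fun i _ ↦ (hc i).2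
  rw [Set.mem_Icc, one_div, inv_mul_le_iff₀ (by positivity), mul_one]
  exact ⟨mul_nonneg (by positivity) (Finset.sum_nonneg fun i _ ↦ (hc i).1), hsum⟩

lemma measureReal_abs_sum_mul_sub_ge_le {Ω ι : Type*} [Fintype ι] [MeasurableSpace Ω]
    {μ : Measure Ω} [IsProbabilityMeasure μ] {Z : ι → Ω → ℝ} {p : ℝ} (hp : 0 ≤ p)
    (hm : ∀ i, Measurable (Z i)) (hZ : ∀ i ω, Z i ω = 0 ∨ Z i ω = 1)
    (hZp : ∀ i, μ {ω | Z i ω = 1} = ENNReal.ofReal p) (h_indep : iIndepFun Z μ)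
    {c : ι → ℝ} (hc : ∀ i, c i ∈ Set.Icc 0 1) {ε : ℝ} (hε : 0 ≤ ε) :
    μ.real {ω | ε ≤ |∑ i, Z i ω * c i - p * ∑ i, c i|} ≤
      2 * Real.exp (-2 * ε ^ 2 / Fintype.card ι) := by
  have h_indep' : iIndepFun (fun i ω ↦ Z i ω * c i) μ :=
    (h_indep.comp (fun i x ↦ x * c i) fun i ↦ measurable_id.mul_const (c i) :)
  have hmem : ∀ i ω, Z i ω * c i ∈ Set.Icc 0 1 := fun i ω ↦ by
    rcases hZ i ω with h | h <;> simp [h, hc i]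
  have hmean : ∀ i, μ[fun ω ↦ Z i ω * c i] = p * c i := fun i ↦ by
    rw [integral_mul_const, integral_eq_measureReal_of_eq_zero_or_one (hm i) (hZ i),
      measureReal_def, hZp i, ENNReal.toReal_ofReal hp]
  simpa [hmean, Finset.mul_sum] using measureReal_abs_sum_sub_integral_ge_le h_indep'
    (fun i ↦ ((hm i).mul_const (c i)).aemeasurable) (fun i ↦ ae_of_all _ (hmem i))
    Finset.univ hε

lemma abs_div_sub_le_of_abs_sub_le {S T ρ n ε : ℝ} (hρ0 : 0 ≤ ρ) (hρ1 : ρ ≤ 1)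
    (hS : |S - n| ≤ ε) (hT : |T - ρ * n| ≤ ε) (hεn : ε < n) :
    0 < S ∧ |T / S - ρ| ≤ 2 * ε / (n - ε) := by
  have hS_lower : n - ε ≤ S := by linarith [neg_abs_le (S - n)]
  have hS_pos : 0 < S := by linarith
  have hnum : |T - ρ * S| ≤ 2 * ε := calc
    |T - ρ * S| = |(T - ρ * n) - ρ * (S - n)| := by ring_nf
    _ ≤ |T - ρ * n| + ρ * |S - n| :=
        (abs_sub _ _).trans_eq (by rw [abs_mul, abs_of_nonneg hρ0])
    _ ≤ ε + 1 * ε := by gcongr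
    _ = 2 * ε := by ring
  refine ⟨hS_pos, ?_⟩
  rw [show T / S - ρ = (T - ρ * S) / S by field_simp, abs_div, abs_of_pos hS_pos]
  exact div_le_div₀ (by linarith [abs_nonneg (T - ρ * S)]) hnum (by linarith) hS_lower

lemma ofReal_one_sub_measureReal_compl_le {Ω : Type*} [MeasurableSpace Ω] (μ : Measure Ω)
    [IsProbabilityMeasure μ] (s : Set Ω) : ENNReal.ofReal (1 - μ.real sᶜ) ≤ μ s := by
  rw [ENNReal.ofReal_le_iff_le_toReal (measure_ne_top μ s), sub_le_iff_le_add, ← measureReal_def]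
  calc 1 = μ.real (s ∪ sᶜ) := by simp
    _ ≤ μ.real s + μ.real sᶜ := measureReal_union_le _ _

theorem stmt_1_general
    {Ω : Type*} [MeasurableSpace Ω] (P : Measure Ω) [IsProbabilityMeasure P]
    (M : ℕ) (hM : 1 ≤ M) (p : ℝ) (hp0 : 0 < p)
    (Z : Fin M → Ω → ℝ)
    (hZmeas : ∀ i, Measurable (Z i))
    (hZval : ∀ i ω, Z i ω = 0 ∨ Z i ω = 1)
    (hZp : ∀ i, P {ω | Z i ω = 1} = ENNReal.ofReal p)
    (hindep : iIndepFun Z P)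
    (Δ : Fin M → ℝ) (hΔ : ∀ i, Δ i = 0 ∨ Δ i = 1)
    (ρ : ℝ) (hρ : ρ = (1 / (M : ℝ)) * ∑ i, Δ i)
    (ε : ℝ) (hε0 : 0 < ε) (hεpM : ε < p * M) :
    ENNReal.ofReal (1 - 4 * Real.exp (-2 * ε ^ 2 / M)) ≤
      P {ω | 0 < (∑ i, Z i ω) ∧
             |(∑ i, Z i ω * Δ i) / (∑ i, Z i ω) - ρ| ≤ 2 * ε / (p * M - ε)} := by
  have hΔ01 : ∀ i, Δ i ∈ Set.Icc (0 : ℝ) 1 := fun i ↦ by rcases hΔ i with h | h <;> simp [h]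
  have hρ01 : ρ ∈ Set.Icc 0 1 := hρ ▸ one_div_mul_sum_mem_Icc_zero_one hΔ01
  have hρpM : ρ * (p * M) = p * ∑ i, Δ i := by rw [hρ]; field_simp
  set e := Real.exp (-2 * ε ^ 2 / M)
  have hcount := measureReal_abs_sum_mul_sub_ge_le hp0.le hZmeas hZval hZp hindep
    (c := fun _ ↦ 1) (by simp) hε0.le
  have hdisagree := measureReal_abs_sum_mul_sub_ge_le hp0.le hZmeas hZval hZp hindep
    hΔ01 hε0.le
  simp only [mul_one, Finset.sum_const, Finset.card_univ, Fintype.card_fin, nsmul_eq_mul]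
    at hcount hdisagree
  refine le_trans ?_ (ofReal_one_sub_measureReal_compl_le P _)
  gcongr
  calc P.real _ ≤ P.real ({ω | ε ≤ |∑ i, Z i ω - p * M|} ∪
        {ω | ε ≤ |∑ i, Z i ω * Δ i - p * ∑ i, Δ i|}) := by
        refine measureReal_mono fun ω hω ↦ ?_
        contrapose! hω
        simp only [Set.mem_union, Set.mem_ofPred_eq, not_or, not_le, ← hρpM] at hω
        exact Set.not_notMem.mpr <|
          abs_div_sub_le_of_abs_sub_le hρ01.1 hρ01.2 hω.1.le hω.2.le hεpM
    _ ≤ 2 * e + 2 * e := (measureReal_union_le _ _).trans (add_le_add hcount hdisagree)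
    _ = 4 * e := by ring

/-- General-ε concentration bound from the proof of Theorem 1: for i.i.d.
Bernoulli(p) indicators `Z_i` and fixed `Δ_i ∈ {0,1}` with true disagreement
rate `ρ = (1/M) Σ Δ_i`, for `0 < ε < pM`, with probability at least
`1 − 4 exp(−2ε²/M)` the sum `Σ Z_i` is positive and the empirical rate
`ρ̂ = (Σ Z_i Δ_i)/(Σ Z_i)` satisfies `|ρ̂ − ρ| ≤ 2ε/(pM − ε)`. -/
theorem stmt_1
    {Ω : Type*} [MeasurableSpace Ω] (P : Measure Ω) [IsProbabilityMeasure P]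
    (M : ℕ) (hM : 1 ≤ M) (p : ℝ) (hp0 : 0 < p) (hp1 : p ≤ 1)
    (Z : Fin M → Ω → ℝ)
    (hZmeas : ∀ i, Measurable (Z i))
    (hZval : ∀ i ω, Z i ω = 0 ∨ Z i ω = 1)
    (hZp : ∀ i, P {ω | Z i ω = 1} = ENNReal.ofReal p)
    (hindep : iIndepFun Z P)
    (Δ : Fin M → ℝ) (hΔ : ∀ i, Δ i = 0 ∨ Δ i = 1)
    (ρ : ℝ) (hρ : ρ = (1 / (M : ℝ)) * ∑ i, Δ i)
    (ε : ℝ) (hε0 : 0 < ε) (hεpM : ε < p * M) :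
    ENNReal.ofReal (1 - 4 * Real.exp (-2 * ε ^ 2 / M)) ≤
      P {ω | 0 < (∑ i, Z i ω) ∧
             |(∑ i, Z i ω * Δ i) / (∑ i, Z i ω) - ρ| ≤ 2 * ε / (p * M - ε)} :=
  stmt_1_general P M hM p hp0 Z hZmeas hZval hZp hindep Δ hΔ ρ hρ ε hε0 hεpM
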